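/- Let Ω ⊂ H^n be an open, horizontally bounded and convex set, d = dist_H(0, ∂Ω) > 0 assuming 0 ∈ Ω, and ξ₀ = (x₀,y₀,t₀) ∈ ∂Ω with d_H(0,ξ₀) = d. If π_{ξ₀} = {(x,y,t) : A·(x−x₀)+B·(y−y₀)+c(t−t₀)=0} is a supporting hyperplane to Ω at ξ₀ with |A|²+|B|²=1, and ζ₀ = (d₀A, d₀B, 0) where d₀ = d/3, then the Euclidean distance in R^{2n} from Pr₁(ζ₀) to Pr₁(π_{ξ₀} ∩ H_{ζ₀}) satisfies dist_H(ζ₀, π_{ξ₀} ∩ H_{ζ₀}) ≤ d₀ + |A·x₀ + B·y₀ + c t₀|/√(1+4c²d₀²) ≤ d/3 + (97^{1/4}/2)·d. -/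

import Mathlib

open scoped BigOperators

/-- A point of the Heisenberg group `ℍⁿ` in real coordinates `(x, y, t)`. -/
abbrev Hpt (n : ℕ) := (Fin n → ℝ) × (Fin n → ℝ) × ℝ

/-- Euclidean dot product on `ℝⁿ`. -/
def dotR {n : ℕ} (a b : Fin n → ℝ) : ℝ := ∑ i, a i * b i

/-- Heisenberg group law. -/
def hmul {n : ℕ} (ξ η : Hpt n) : Hpt n :=
  (ξ.1 + η.1, ξ.2.1 + η.2.1,
    ξ.2.2 + η.2.2 + 2 * (dotR ξ.2.1 η.1 - dotR ξ.1 η.2.1))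

/-- Heisenberg group inverse. -/
def hinv {n : ℕ} (ξ : Hpt n) : Hpt n := (-ξ.1, -ξ.2.1, -ξ.2.2)

/-- Heisenberg dilation `δ_l`. -/
def hdil {n : ℕ} (l : ℝ) (ξ : Hpt n) : Hpt n := (l • ξ.1, l • ξ.2.1, l ^ 2 * ξ.2.2)

/-- The Korányi gauge `N(x,y,t) = ((|x|²+|y|²)² + t²)^(1/4)`. -/
noncomputable def KN {n : ℕ} (ξ : Hpt n) : ℝ :=
  ((dotR ξ.1 ξ.1 + dotR ξ.2.1 ξ.2.1) ^ 2 + ξ.2.2 ^ 2) ^ ((1 : ℝ) / 4)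

/-- The Korányi–Cygan metric. -/
noncomputable def dH {n : ℕ} (ξ η : Hpt n) : ℝ := KN (hmul (hinv η) ξ)

/-- The horizontal plane at `ξ₀`. -/
def Hplane {n : ℕ} (ξ₀ : Hpt n) : Set (Hpt n) :=
  {ξ | ξ.2.2 = ξ₀.2.2 + 2 * (dotR ξ.1 ξ₀.2.1 - dotR ξ₀.1 ξ.2.1)}

/-- Projection onto the first `2n` coordinates. -/
def Pr1 {n : ℕ} (ξ : Hpt n) : (Fin n → ℝ) × (Fin n → ℝ) := (ξ.1, ξ.2.1)

/-- Dot product on `ℝ^{2n}`. -/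
def dot2n {n : ℕ} (p q : (Fin n → ℝ) × (Fin n → ℝ)) : ℝ := dotR p.1 q.1 + dotR p.2 q.2

/-- The horizontal subdifferential of `u` (with domain `Ω`) at `ξ₀`. -/
def subdiffH {n : ℕ} (Ω : Set (Hpt n)) (u : Hpt n → ℝ) (ξ₀ : Hpt n) :
    Set ((Fin n → ℝ) × (Fin n → ℝ)) :=
  {p | ∀ ξ ∈ Ω ∩ Hplane ξ₀, u ξ ≥ u ξ₀ + dot2n p (Pr1 ξ - Pr1 ξ₀)}

/-- `H`-convexity of a set. -/
def HConvexSet {n : ℕ} (S : Set (Hpt n)) : Prop :=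
  ∀ ξ₁ ∈ S, ∀ ξ₂ ∈ S, ξ₁ ∈ Hplane ξ₂ → ∀ l ∈ Set.Icc (0 : ℝ) 1,
    hmul ξ₁ (hdil l (hmul (hinv ξ₁) ξ₂)) ∈ S

/-- `H`-convexity of a function on a set. -/
def HConvexOn {n : ℕ} (S : Set (Hpt n)) (u : Hpt n → ℝ) : Prop :=
  ∀ ξ₁ ∈ S, ∀ ξ₂ ∈ S, ξ₁ ∈ Hplane ξ₂ → ∀ l ∈ Set.Icc (0 : ℝ) 1,
    u (hmul ξ₁ (hdil l (hmul (hinv ξ₁) ξ₂))) ≤ (1 - l) * u ξ₁ + l * u ξ₂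

/-- Horizontal boundedness: the horizontal slices have uniformly bounded diameter. -/
def horizBounded {n : ℕ} (Ω : Set (Hpt n)) : Prop :=
  ∃ M : ℝ, ∀ ξ ∈ Ω, ∀ ζ ∈ Ω ∩ Hplane ξ, ∀ η ∈ Ω ∩ Hplane ξ, dH ζ η ≤ M

/-!
Let `e = d / 3`, `ζ₀ = (eA, eB, 0)` and `s = A·x₀ + B·y₀ + ct₀`. In the horizontal plane of `ζ₀`,
moving by `l` in the direction `(A + 2ce B, B - 2ce A)` changes `A·x + B·y + ct` at the rate
`V = 1 + 4c²e²` and the gauge distance to `ζ₀` at the rate `√V`; the step `l = (s - e) / V`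
reaches the plane `π`, at distance `|s - e| / √V ≤ e + |s| / √V`.
For the second bound, with `Q = |x₀|² + |y₀|²`, Cauchy–Schwarz gives `s² ≤ V (Q + t₀² / 4e²)`;
applied again to `(Q, |t₀|) · (1, |t₀| / 4e²)`, with `|t₀| ≤ N(ξ₀)² = 9e²`, it gives
`Q + t₀² / 4e² ≤ (√97 / 4) N(ξ₀)²`.
-/

open Matrix

section DotProduct

variable {n : ℕ}

lemma dotR_eq_dotProduct (a b : Fin n → ℝ) : dotR a b = a ⬝ᵥ b := rfl

lemma dotR_self_nonneg (a : Fin n → ℝ) : 0 ≤ dotR a a :=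
  Finset.sum_nonneg fun i _ => mul_self_nonneg (a i)

lemma sq_dotR_add_dotR_le (A B x y : Fin n → ℝ) :
    (dotR A x + dotR B y) ^ 2 ≤ (dotR A A + dotR B B) * (dotR x x + dotR y y) := by
  simpa [dotR, Fintype.sum_sum_type, sq] using
    Finset.sum_mul_sq_le_sq_mul_sq Finset.univ (Sum.elim A B) (Sum.elim x y)

end DotProduct

lemma sq_mul_add_mul_le (a b c d : ℝ) :
    (a * c + b * d) ^ 2 ≤ (a ^ 2 + b ^ 2) * (c ^ 2 + d ^ 2) := by
  nlinarith [sq_nonneg (a * d - b * c)]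

lemma rpow_one_div_four_sq {x : ℝ} (hx : 0 ≤ x) : (x ^ ((1 : ℝ) / 4)) ^ 2 = √x := by
  rw [← Real.rpow_natCast, ← Real.rpow_mul hx, Real.sqrt_eq_rpow]
  norm_num

section Heisenberg

variable {n : ℕ}

lemma KN_nonneg (ξ : Hpt n) : 0 ≤ KN ξ := by
  unfold KN
  positivity

lemma KN_pow_four (ξ : Hpt n) :
    KN ξ ^ 4 = (dotR ξ.1 ξ.1 + dotR ξ.2.1 ξ.2.1) ^ 2 + ξ.2.2 ^ 2 := by
  rw [KN, ← Real.rpow_natCast, ← Real.rpow_mul (by positivity)]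
  norm_num

lemma KN_mk_zero (x y : Fin n → ℝ) : KN (x, y, 0) = √(dotR x x + dotR y y) := by
  have hQ : 0 ≤ dotR x x + dotR y y := add_nonneg (dotR_self_nonneg x) (dotR_self_nonneg y)
  rw [KN]
  dsimp only
  rw [zero_pow two_ne_zero, add_zero, ← Real.rpow_natCast _ 2, ← Real.rpow_mul hQ,
    Real.sqrt_eq_rpow]
  norm_num

lemma dH_zero_left (ξ : Hpt n) : dH (0, 0, 0) ξ = KN ξ := by
  simp [dH, KN, hmul, hinv, dotR]

lemma dH_of_mem_Hplane {ζ₀ ζ : Hpt n} (h : ζ ∈ Hplane ζ₀) :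
    dH ζ₀ ζ = √(dotR (ζ₀.1 - ζ.1) (ζ₀.1 - ζ.1) + dotR (ζ₀.2.1 - ζ.2.1) (ζ₀.2.1 - ζ.2.1)) := by
  have ht : ζ₀.2.2 - ζ.2.2 + 2 * (dotR (-ζ.2.1) ζ₀.1 - dotR (-ζ.1) ζ₀.2.1) = 0 := by
    rw [Hplane, Set.mem_ofPred_eq] at h
    simp only [dotR_eq_dotProduct, neg_dotProduct] at h ⊢
    rw [h, dotProduct_comm ζ.2.1]
    ring
  rw [dH, hmul, hinv]
  simp only [neg_add_eq_sub]
  rw [ht, KN_mk_zero]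

lemma dH_nonneg (ξ η : Hpt n) : 0 ≤ dH ξ η := KN_nonneg _

end Heisenberg

section Twirling

variable {n : ℕ}

def normalPlane (A B : Fin n → ℝ) (c : ℝ) (ξ₀ : Hpt n) : Set (Hpt n) :=
  {ξ | dotR A (ξ.1 - ξ₀.1) + dotR B (ξ.2.1 - ξ₀.2.1) + c * (ξ.2.2 - ξ₀.2.2) = 0}

theorem exists_mem_normalPlane_inter_Hplane_dH_le (ξ₀ : Hpt n) {A B : Fin n → ℝ} (c : ℝ)
    (hAB : dotR A A + dotR B B = 1) {e : ℝ} (he : 0 ≤ e) :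
    ∃ ζ ∈ normalPlane A B c ξ₀ ∩ Hplane (e • A, e • B, 0),
      dH (e • A, e • B, 0) ζ ≤
        e + |dotR A ξ₀.1 + dotR B ξ₀.2.1 + c * ξ₀.2.2| / √(1 + 4 * c ^ 2 * e ^ 2) := by
  set s := dotR A ξ₀.1 + dotR B ξ₀.2.1 + c * ξ₀.2.2
  set V := 1 + 4 * c ^ 2 * e ^ 2
  have hV : 0 < V := by positivity
  have hsqrtV : 1 ≤ √V := Real.one_le_sqrt.mpr (le_add_of_nonneg_right (by positivity))
  obtain ⟨l, hl⟩ : ∃ l, l * V = s - e := ⟨(s - e) / V, div_mul_cancel₀ _ hV.ne'⟩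
  set u : Fin n → ℝ := A + (2 * c * e) • B
  set w : Fin n → ℝ := B - (2 * c * e) • A
  set ζ : Hpt n := (e • A + l • u, e • B + l • w, 4 * c * e ^ 2 * l)
  simp only [dotR_eq_dotProduct] at hAB
  have hH : ζ ∈ Hplane (e • A, e • B, 0) := by
    simp only [Hplane, Set.mem_ofPred_eq, dotR_eq_dotProduct, ζ, u, w, add_dotProduct,
      dotProduct_add, dotProduct_sub, dotProduct_smul, smul_dotProduct, smul_eq_mul]
    linear_combination (-4 * c * e ^ 2 * l) * hAB
  refine ⟨ζ, ⟨?_, hH⟩, ?_⟩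
  · simp only [normalPlane, Set.mem_ofPred_eq, dotR_eq_dotProduct, ζ, u, w, dotProduct_add,
      dotProduct_sub, dotProduct_smul, smul_eq_mul, dotProduct_comm B A]
    simp only [s, dotR_eq_dotProduct] at hl
    linear_combination (e + l) * hAB + hl
  · have hnorm : dotR (-(l • u)) (-(l • u)) + dotR (-(l • w)) (-(l • w)) = l ^ 2 * V := by
      simp only [dotR_eq_dotProduct, u, w, neg_dotProduct, dotProduct_neg, add_dotProduct,
        sub_dotProduct, dotProduct_add, dotProduct_sub, dotProduct_smul, smul_dotProduct,
        smul_eq_mul, dotProduct_comm B A]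
      linear_combination (l ^ 2 * V) * hAB
    calc dH (e • A, e • B, 0) _ = √(l ^ 2 * V) := by
          rw [dH_of_mem_Hplane hH]
          simp only [ζ, sub_add_cancel_left]
          rw [hnorm]
      _ = |s - e| / √V := by
          rw [Real.sqrt_mul (sq_nonneg l), Real.sqrt_sq_eq_abs, eq_div_iff (by positivity),
            mul_assoc, Real.mul_self_sqrt hV.le, ← abs_of_pos hV, ← abs_mul, hl]
      _ ≤ (|s| + e) / √V := by
          gcongr
          simpa [abs_of_nonneg he] using abs_sub s e
      _ ≤ e + |s| / √V := by
          rw [add_div]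
          linarith [div_le_self he hsqrtV]

end Twirling

section GaugeBound

variable {n : ℕ}

lemma sq_dotR_add_dotR_add_mul_le (x y : Fin n → ℝ) (t : ℝ) {A B : Fin n → ℝ} (c : ℝ)
    (hAB : dotR A A + dotR B B = 1) {e : ℝ} (he : e ≠ 0) :
    (dotR A x + dotR B y + c * t) ^ 2 ≤
      (1 + 4 * c ^ 2 * e ^ 2) * (dotR x x + dotR y y + t ^ 2 / (4 * e ^ 2)) := by
  set p := dotR A x + dotR B y
  have hp : p ^ 2 ≤ dotR x x + dotR y y := by
    simpa [hAB] using sq_dotR_add_dotR_le A B x y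
  calc (p + c * t) ^ 2 = (1 * p + (2 * c * e) * (t / (2 * e))) ^ 2 := by
        field_simp
    _ ≤ (1 ^ 2 + (2 * c * e) ^ 2) * (p ^ 2 + (t / (2 * e)) ^ 2) := sq_mul_add_mul_le ..
    _ = (1 + 4 * c ^ 2 * e ^ 2) * (p ^ 2 + t ^ 2 / (4 * e ^ 2)) := by ring
    _ ≤ (1 + 4 * c ^ 2 * e ^ 2) * (dotR x x + dotR y y + t ^ 2 / (4 * e ^ 2)) := by gcongr

lemma horizontal_add_le_KN_sq (ξ : Hpt n) {e : ℝ} (he : 0 < e) (hξ : KN ξ ≤ 3 * e) :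
    dotR ξ.1 ξ.1 + dotR ξ.2.1 ξ.2.1 + ξ.2.2 ^ 2 / (4 * e ^ 2) ≤ √97 / 4 * KN ξ ^ 2 := by
  set Q := dotR ξ.1 ξ.1 + dotR ξ.2.1 ξ.2.1
  set t := ξ.2.2
  have hQ : 0 ≤ Q := add_nonneg (dotR_self_nonneg _) (dotR_self_nonneg _)
  have hN4 : KN ξ ^ 4 = Q ^ 2 + t ^ 2 := KN_pow_four ξ
  have ht : t ^ 2 ≤ 81 * e ^ 4 := by
    nlinarith [pow_le_pow_left₀ (KN_nonneg ξ) hξ 4, sq_nonneg Q]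
  have hsq : (Q + t ^ 2 / (4 * e ^ 2)) ^ 2 ≤ 97 / 16 * KN ξ ^ 4 :=
    calc (Q + t ^ 2 / (4 * e ^ 2)) ^ 2 = (1 * Q + (t / (4 * e ^ 2)) * t) ^ 2 := by ring
      _ ≤ (1 ^ 2 + (t / (4 * e ^ 2)) ^ 2) * (Q ^ 2 + t ^ 2) := sq_mul_add_mul_le ..
      _ ≤ 97 / 16 * KN ξ ^ 4 := by
        rw [hN4]
        gcongr
        rw [div_pow, one_pow, ← le_sub_iff_add_le', div_le_iff₀ (by positivity)]
        linarith
  have hrhs : (√97 / 4 * KN ξ ^ 2) ^ 2 = 97 / 16 * KN ξ ^ 4 := by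
    rw [mul_pow, div_pow, Real.sq_sqrt (by norm_num)]
    ring
  exact (pow_le_pow_iff_left₀ (by positivity) (by positivity) two_ne_zero).mp (hrhs ▸ hsq)

theorem abs_affine_div_sqrt_le_KN (ξ : Hpt n) {A B : Fin n → ℝ} (c : ℝ)
    (hAB : dotR A A + dotR B B = 1) {e : ℝ} (he : 0 < e) (hξ : KN ξ ≤ 3 * e) :
    |dotR A ξ.1 + dotR B ξ.2.1 + c * ξ.2.2| / √(1 + 4 * c ^ 2 * e ^ 2) ≤
      (97 : ℝ) ^ ((1 : ℝ) / 4) / 2 * KN ξ := by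
  have hV : 0 ≤ 1 + 4 * c ^ 2 * e ^ 2 := by positivity
  rw [div_le_iff₀ (by positivity)]
  refine abs_le_of_sq_le_sq ?_ (by have := KN_nonneg ξ; positivity)
  calc (dotR A ξ.1 + dotR B ξ.2.1 + c * ξ.2.2) ^ 2
      ≤ (1 + 4 * c ^ 2 * e ^ 2) *
          (dotR ξ.1 ξ.1 + dotR ξ.2.1 ξ.2.1 + ξ.2.2 ^ 2 / (4 * e ^ 2)) :=
        sq_dotR_add_dotR_add_mul_le ξ.1 ξ.2.1 ξ.2.2 c hAB he.ne'
    _ ≤ (1 + 4 * c ^ 2 * e ^ 2) * (√97 / 4 * KN ξ ^ 2) := by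
        gcongr
        exact horizontal_add_le_KN_sq ξ he hξ
    _ = ((97 : ℝ) ^ ((1 : ℝ) / 4) / 2 * KN ξ * √(1 + 4 * c ^ 2 * e ^ 2)) ^ 2 := by
        rw [mul_pow, mul_pow, div_pow, rpow_one_div_four_sq (by norm_num), Real.sq_sqrt hV]
        ring

end GaugeBound

theorem geometric_estimate_general {n : ℕ} (ξ₀ : Hpt n)
    (d : ℝ) (hd : 0 < d) (hdeq : d = dH ((0 : Fin n → ℝ), (0 : Fin n → ℝ), (0 : ℝ)) ξ₀)
    (A B : Fin n → ℝ) (c : ℝ) (hnorm : dotR A A + dotR B B = 1) :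
    sInf {r : ℝ | ∃ ζ ∈
        {ξ : Hpt n | dotR A (ξ.1 - ξ₀.1) + dotR B (ξ.2.1 - ξ₀.2.1)
            + c * (ξ.2.2 - ξ₀.2.2) = 0} ∩
          Hplane ((d / 3) • A, (d / 3) • B, (0 : ℝ)),
        r = dH ((d / 3) • A, (d / 3) • B, (0 : ℝ)) ζ}
      ≤ d / 3 + |dotR A ξ₀.1 + dotR B ξ₀.2.1 + c * ξ₀.2.2|
          / Real.sqrt (1 + 4 * c ^ 2 * (d / 3) ^ 2) ∧
    d / 3 + |dotR A ξ₀.1 + dotR B ξ₀.2.1 + c * ξ₀.2.2|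
        / Real.sqrt (1 + 4 * c ^ 2 * (d / 3) ^ 2)
      ≤ d / 3 + ((97 : ℝ) ^ ((1 : ℝ) / 4) / 2) * d := by
  have hd₀ : 0 < d / 3 := by positivity
  have hKN : KN ξ₀ = d := by rw [hdeq, dH_zero_left]
  obtain ⟨ζ, hζ, hdist⟩ :=
    exists_mem_normalPlane_inter_Hplane_dH_le ξ₀ c hnorm hd₀.le
  constructor
  · refine (csInf_le ?_ ?_).trans hdist
    · exact ⟨0, by rintro _ ⟨η, -, rfl⟩; exact dH_nonneg _ _⟩
    · exact ⟨ζ, hζ, rfl⟩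
  · have := abs_affine_div_sqrt_le_KN ξ₀ c hnorm hd₀ (by linarith)
    rw [hKN] at this
    linarith

/-- Quantitative estimate on the distance from `ζ₀ = (d₀A, d₀B, 0)` to the
intersection of a supporting hyperplane with the horizontal plane at `ζ₀`
(twirling of horizontal planes; Proposition 4.4). -/
theorem geometric_estimate {n : ℕ} (Ω : Set (Hpt n)) (hopen : IsOpen Ω)
    (hhb : horizBounded Ω) (hconv : Convex ℝ Ω)
    (h0 : ((0 : Fin n → ℝ), (0 : Fin n → ℝ), (0 : ℝ)) ∈ Ω)
    (ξ₀ : Hpt n) (hξ₀ : ξ₀ ∈ frontier Ω)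
    (d : ℝ) (hd : 0 < d) (hdeq : d = dH ((0 : Fin n → ℝ), (0 : Fin n → ℝ), (0 : ℝ)) ξ₀)
    (hdmin : ∀ η ∈ frontier Ω, d ≤ dH ((0 : Fin n → ℝ), (0 : Fin n → ℝ), (0 : ℝ)) η)
    (A B : Fin n → ℝ) (c : ℝ) (hnorm : dotR A A + dotR B B = 1)
    (hsupp : ∀ ξ ∈ Ω,
      dotR A (ξ.1 - ξ₀.1) + dotR B (ξ.2.1 - ξ₀.2.1) + c * (ξ.2.2 - ξ₀.2.2) ≤ 0) :
    sInf {r : ℝ | ∃ ζ ∈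
        {ξ : Hpt n | dotR A (ξ.1 - ξ₀.1) + dotR B (ξ.2.1 - ξ₀.2.1)
            + c * (ξ.2.2 - ξ₀.2.2) = 0} ∩
          Hplane ((d / 3) • A, (d / 3) • B, (0 : ℝ)),
        r = dH ((d / 3) • A, (d / 3) • B, (0 : ℝ)) ζ}
      ≤ d / 3 + |dotR A ξ₀.1 + dotR B ξ₀.2.1 + c * ξ₀.2.2|
          / Real.sqrt (1 + 4 * c ^ 2 * (d / 3) ^ 2) ∧
    d / 3 + |dotR A ξ₀.1 + dotR B ξ₀.2.1 + c * ξ₀.2.2|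
        / Real.sqrt (1 + 4 * c ^ 2 * (d / 3) ^ 2)
      ≤ d / 3 + ((97 : ℝ) ^ ((1 : ℝ) / 4) / 2) * d :=
  geometric_estimate_general ξ₀ d hd hdeq A B c hnorm
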